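/- arXiv:1204.1873 — 3 statements merged into one kernel-verified Lean document; each statement's English description precedes it below -/
import Mathlib

section
/- (Characterization of Infeasibility / Distance Duality) Let S = {v_1, ..., v_n} be a finite nonempty set of points in ℝ^m and p ∈ ℝ^m. Then p does not lie in conv(S) if and only if there exists a p-witness, i.e., a point p' ∈ conv(S) such that d(p', v_i) < d(p, v_i) for every i = 1, ..., n. -/
open RealInnerProductSpace

/-!
If `p ∉ conv(S)`, the nearest point `p'` of `conv(S)` to `p` sees `p` and every `w ∈ conv(S)` at a
non-acute angle, so `p'` is strictly closer than `p` to every point of `conv(S)`. Conversely, the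
points strictly closer to `p'` than to `p` form an open half-space; it contains `S`, hence
`conv(S)`, but not `p`.
-/

variable {F : Type*} [NormedAddCommGroup F] [InnerProductSpace ℝ F]

theorem dist_lt_dist_of_real_inner_le_zero {p q w : F} (hpq : p ≠ q) (h : ⟪p - q, w - q⟫ ≤ 0) :
    dist q w < dist p w := by
  have hpq' : 0 < ‖p - q‖ := norm_pos_iff.mpr (sub_ne_zero.mpr hpq)
  have hsq : ‖w - q‖ ^ 2 < ‖w - p‖ ^ 2 := by
    rw [show w - p = (w - q) - (p - q) by abel, norm_sub_sq_real (w - q), real_inner_comm]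
    nlinarith
  rw [dist_comm q, dist_comm p, dist_eq_norm, dist_eq_norm]
  exact lt_of_pow_lt_pow_left₀ 2 (norm_nonneg _) hsq

theorem exists_forall_dist_lt_of_notMem {K : Set F} (hne : K.Nonempty) (hK : IsComplete K)
    (hconv : Convex ℝ K) {p : F} (hp : p ∉ K) : ∃ q ∈ K, ∀ w ∈ K, dist q w < dist p w := by
  obtain ⟨q, hqK, hq⟩ := exists_norm_eq_iInf_of_complete_convex hne hK hconv p
  have hobtuse := (norm_eq_iInf_iff_real_inner_le_zero hconv hqK).mp hq
  have hpq : p ≠ q := fun h => hp (h ▸ hqK)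
  exact ⟨q, hqK, fun w hw => dist_lt_dist_of_real_inner_le_zero hpq (hobtuse w hw)⟩

theorem convex_setOf_dist_lt_dist (p q : F) : Convex ℝ {x | dist q x < dist p x} := by
  have hset : {x | dist q x < dist p x} = {x | ⟪p - q, x⟫ < (‖p‖ ^ 2 - ‖q‖ ^ 2) / 2} := by
    ext x
    change dist q x < dist p x ↔ ⟪p - q, x⟫ < _
    rw [← pow_lt_pow_iff_left₀ dist_nonneg dist_nonneg two_ne_zero, dist_comm q, dist_comm p,
      dist_eq_norm, dist_eq_norm, norm_sub_sq_real, norm_sub_sq_real, real_inner_comm q,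
      real_inner_comm p, inner_sub_left]
    constructor <;> intro h <;> linarith
  rw [hset]
  exact convex_halfSpace_lt (innerₛₗ ℝ (p - q)).isLinear _

theorem notMem_convexHull_of_forall_dist_lt {s : Set F} {p q : F}
    (h : ∀ w ∈ s, dist q w < dist p w) : p ∉ convexHull ℝ s := fun hp => by
  have hpq : dist q p < dist p p := convexHull_min h (convex_setOf_dist_lt_dist p q) hp
  exact (dist_self p ▸ hpq).not_ge dist_nonneg

/-- **Characterization of Infeasibility / Distance Duality**. `p ∉ conv(S)` iff there is a
`p`-witness: a point `p' ∈ conv(S)` with `d(p', v i) < d(p, v i)` for every `i`. -/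
theorem characterization_of_infeasibility {m n : ℕ} (hn : 0 < n)
    (v : Fin n → EuclideanSpace ℝ (Fin m)) (p : EuclideanSpace ℝ (Fin m)) :
    p ∉ convexHull ℝ (Set.range v) ↔
      ∃ p' ∈ convexHull ℝ (Set.range v), ∀ i : Fin n, dist p' (v i) < dist p (v i) := by
  constructor
  · intro hp
    have hne : (convexHull ℝ (Set.range v)).Nonempty :=
      (convexHull_nonempty_iff (𝕜 := ℝ)).mpr (Set.range_nonempty_iff_nonempty.mpr ⟨⟨0, hn⟩⟩)
    obtain ⟨q, hq, hcloser⟩ := exists_forall_dist_lt_of_notMem hne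
      ((Set.finite_range v).isCompact_convexHull (𝕜 := ℝ)).isComplete (convex_convexHull ℝ _) hp
    exact ⟨q, hq, fun i => hcloser _ (subset_convexHull ℝ _ (Set.mem_range_self i))⟩
  · rintro ⟨q, -, hcloser⟩
    exact notMem_convexHull_of_forall_dist_lt (by simpa using hcloser)
end

section
/- (Orthogonal Bisector Property) Let S = {v_1, ..., v_n} be a finite nonempty set of points in ℝ^m and p ∈ ℝ^m. Suppose p' ∈ conv(S) is a p-witness, i.e., d(p', v_i) < d(p, v_i) for all i = 1, ..., n. Set c = p - p' and γ = (1/2)(‖p‖² - ‖p'‖²). Then cᵀp > γ, and cᵀx < γ for every x ∈ conv(S); in particular, the hyperplane H = {x ∈ ℝ^m : cᵀx = γ} (the orthogonal bisector of the segment pp') separates p from conv(S). -/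
/-!
Expanding `‖x - a‖² - ‖x - b‖²` shows that the points strictly closer to `b` than to `a` form the
open half-space `{x | ⟪a - b, x⟫ < (‖a‖² - ‖b‖²) / 2}`. Being convex, it contains the convex hull
of the `v i`, in particular `p'` itself; since `p'` is then strictly closer to itself than to `p`,
`p ≠ p'`, so `p` lies strictly on the other side.
-/

open RealInnerProductSpace

section ClosestPointHalfSpace

variable {E : Type*} [NormedAddCommGroup E] [InnerProductSpace ℝ E]

theorem dist_lt_dist_iff_inner_sub_lt (a b x : E) :
    dist b x < dist a x ↔ ⟪a - b, x⟫ < (‖a‖ ^ 2 - ‖b‖ ^ 2) / 2 := by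
  rw [← pow_lt_pow_iff_left₀ dist_nonneg dist_nonneg two_ne_zero, dist_eq_norm, dist_eq_norm,
    norm_sub_sq_real, norm_sub_sq_real, inner_sub_left]
  constructor <;> intro h <;> linarith

theorem convex_setOf_dist_lt_dist_s4 (a b : E) : Convex ℝ {x | dist b x < dist a x} := by
  simp only [dist_lt_dist_iff_inner_sub_lt a b]
  exact convex_halfSpace_lt (innerₛₗ ℝ (a - b)).isLinear _

theorem dist_lt_dist_of_mem_convexHull {a b : E} {s : Set E}
    (hs : ∀ y ∈ s, dist b y < dist a y) {x : E} (hx : x ∈ convexHull ℝ s) :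
    dist b x < dist a x :=
  convexHull_min hs (convex_setOf_dist_lt_dist_s4 a b) hx

end ClosestPointHalfSpace

theorem orthogonal_bisector_property_general {m n : ℕ}
    (v : Fin n → EuclideanSpace ℝ (Fin m)) (p p' : EuclideanSpace ℝ (Fin m))
    (hp' : p' ∈ convexHull ℝ (Set.range v))
    (hwit : ∀ i : Fin n, dist p' (v i) < dist p (v i)) :
    inner ℝ (p - p') p > (‖p‖ ^ 2 - ‖p'‖ ^ 2) / 2 ∧
      ∀ x ∈ convexHull ℝ (Set.range v),
        inner ℝ (p - p') x < (‖p‖ ^ 2 - ‖p'‖ ^ 2) / 2 := by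
  have hull : ∀ x ∈ convexHull ℝ (Set.range v), dist p' x < dist p x := fun x ↦
    dist_lt_dist_of_mem_convexHull (Set.forall_mem_range.2 hwit)
  refine ⟨?_, fun x hx ↦ (dist_lt_dist_iff_inner_sub_lt p p' x).1 (hull x hx)⟩
  have hpp' : dist p p < dist p' p := by
    simpa [dist_comm] using hull p' hp'
  have h := (dist_lt_dist_iff_inner_sub_lt p' p p).1 hpp'
  rw [← neg_sub p p', inner_neg_left] at h
  linarith

/-- **Orthogonal Bisector Property**. If `p'` is a `p`-witness, then with `c = p - p'` and
`γ = (‖p‖² - ‖p'‖²)/2`, we have `⟪c, p⟫ > γ` and `⟪c, x⟫ < γ` for every `x ∈ conv(S)`;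
i.e. the orthogonal bisector of segment `p p'` separates `p` from `conv(S)`. -/
theorem orthogonal_bisector_property {m n : ℕ} (hn : 0 < n)
    (v : Fin n → EuclideanSpace ℝ (Fin m)) (p p' : EuclideanSpace ℝ (Fin m))
    (hp' : p' ∈ convexHull ℝ (Set.range v))
    (hwit : ∀ i : Fin n, dist p' (v i) < dist p (v i)) :
    inner ℝ (p - p') p > (‖p‖ ^ 2 - ‖p'‖ ^ 2) / 2 ∧
      ∀ x ∈ convexHull ℝ (Set.range v),
        inner ℝ (p - p') x < (‖p‖ ^ 2 - ‖p'‖ ^ 2) / 2 :=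
  orthogonal_bisector_property_general v p p' hp' hwit
end

section
/- (Forbidden zone of a polytope is a union of balls) Let w_1, ..., w_n be points in ℝ^m (n ≥ 1), let P = conv({w_1, ..., w_n}), and let q ∈ P. Then the forbidden zone F(P, q) = {z ∈ ℝ^m : d(z, y) < d(y, q) for some y ∈ P} equals the union of the open balls centered at the w_i with radii d(q, w_i), i.e., F(P, q) = ⋃_{i=1}^n {z ∈ ℝ^m : d(z, w_i) < d(w_i, q)}. -/
/-!
The set of points at least as close to `q` as to `z` is a closed half-space, hence convex.
If `z` lies in none of the balls, every vertex `w` is in that half-space, so the whole convex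
hull is, and no `y` in the hull is closer to `z` than to `q`.
-/

open Metric RealInnerProductSpace

section

variable {E : Type*} [NormedAddCommGroup E] [InnerProductSpace ℝ E]

theorem dist_le_dist_iff_inner_le (x a b : E) :
    dist x a ≤ dist x b ↔ ⟪b - a, x⟫ ≤ (‖b‖ ^ 2 - ‖a‖ ^ 2) / 2 := by
  rw [← pow_le_pow_iff_left₀ dist_nonneg dist_nonneg two_ne_zero, dist_eq_norm, dist_eq_norm,
    norm_sub_sq_real, norm_sub_sq_real, inner_sub_left, real_inner_comm a, real_inner_comm b]
  constructor <;> intro h <;> linarith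

theorem convex_setOf_dist_le_dist (a b : E) : Convex ℝ {x | dist x a ≤ dist x b} := by
  simp only [dist_le_dist_iff_inner_le]
  exact convex_halfSpace_le (innerₛₗ ℝ (b - a)).isLinear _

theorem setOf_exists_mem_convexHull_dist_lt_eq_biUnion_ball (s : Set E) (q : E) :
    {z | ∃ y ∈ convexHull ℝ s, dist z y < dist y q} = ⋃ w ∈ s, ball w (dist w q) := by
  ext z
  simp only [Set.mem_ofPred_eq, Set.mem_iUnion, mem_ball, exists_prop]
  constructor
  · rintro ⟨y, hy, hzy⟩
    by_contra! h
    have hull_sub : convexHull ℝ s ⊆ {x | dist x q ≤ dist x z} :=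
      convexHull_min (fun w hw => (h w hw).trans_eq (dist_comm z w))
        (convex_setOf_dist_le_dist q z)
    have hy_closer_q : dist y q ≤ dist y z := hull_sub hy
    rw [dist_comm y z] at hy_closer_q
    exact hy_closer_q.not_gt hzy
  · rintro ⟨w, hw, hzw⟩
    exact ⟨w, subset_convexHull ℝ s hw, hzw⟩

end

theorem forbidden_zone_eq_union_balls_general {m n : ℕ}
    (w : Fin n → EuclideanSpace ℝ (Fin m)) (q : EuclideanSpace ℝ (Fin m)) :
    {z : EuclideanSpace ℝ (Fin m) |
        ∃ y ∈ convexHull ℝ (Set.range w), dist z y < dist y q} =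
      ⋃ i : Fin n, Metric.ball (w i) (dist (w i) q) := by
  rw [setOf_exists_mem_convexHull_dist_lt_eq_biUnion_ball, Set.biUnion_range]

/-- **Forbidden zone of a polytope is a union of balls**. For `P = conv({w 1, …, w n})` and
`q ∈ P`, the forbidden zone `F(P,q) = {z : ∃ y ∈ P, d(z,y) < d(y,q)}` equals the union of
the open balls centered at the `w i` with radii `d(q, w i)`. -/
theorem forbidden_zone_eq_union_balls {m n : ℕ} (hn : 0 < n)
    (w : Fin n → EuclideanSpace ℝ (Fin m)) (q : EuclideanSpace ℝ (Fin m))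
    (hq : q ∈ convexHull ℝ (Set.range w)) :
    {z : EuclideanSpace ℝ (Fin m) |
        ∃ y ∈ convexHull ℝ (Set.range w), dist z y < dist y q} =
      ⋃ i : Fin n, Metric.ball (w i) (dist (w i) q) :=
  forbidden_zone_eq_union_balls_general w q
end
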